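/- arXiv:1608.05498 — 2 statements merged into one kernel-verified Lean document; each statement's English description precedes it below -/
import Mathlib

section
/- Let X be an integrable real random variable with continuous strictly increasing distribution function F, α ∈ (0,1), q = F⁻¹(α), and let S(r,x) = (1-α-1{x>r})r + 1{x>r}x be the pinball loss. If q < r < r' or r' < r < q, then E[S(q,X)] < E[S(r,X)] < E[S(r',X)]. -/
/-! The expected score is `(1 - α) r + E (X - r)⁺`. Comparing `(X - a)⁺ - (X - b)⁺` with `b - a`
on the tails `{X ≥ b} ⊆ {X > a}` shows that, for `a < b`, the expected score increases by at least
`(b - a) (F a - α)` and at most `(b - a) (F b - α)`. As `F` is strictly increasing with `F q = α`,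
splitting `[a, b]` at its midpoint makes the increment strictly positive to the right of `q` and
strictly negative to its left. -/

open MeasureTheory

def pinballLoss (α r x : ℝ) : ℝ := (1 - α) * r + max (x - r) 0

lemma pinballLoss_eq_ite (α r x : ℝ) :
    pinballLoss α r x
      = (1 - α - (if r < x then (1:ℝ) else 0)) * r + (if r < x then (1:ℝ) else 0) * x := by
  unfold pinballLoss
  split_ifs
  · rw [max_eq_left (by linarith)]; ring
  · rw [max_eq_right (by linarith)]; ring

lemma indicator_Ici_le_max_sub_sub_max_sub {a b : ℝ} (hab : a ≤ b) (x : ℝ) :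
    (Set.Ici b).indicator (fun _ => b - a) x ≤ max (x - a) 0 - max (x - b) 0 := by
  by_cases hbx : b ≤ x
  · rw [Set.indicator_of_mem (Set.mem_Ici.2 hbx), max_eq_left (by linarith),
      max_eq_left (by linarith)]
    linarith
  · rw [Set.indicator_of_notMem (mt Set.mem_Ici.1 hbx),
      max_eq_right (show x - b ≤ 0 by linarith [not_le.1 hbx]), sub_zero]
    exact le_max_right _ _

lemma max_sub_sub_max_sub_le_indicator_Ioi {a b : ℝ} (hab : a ≤ b) (x : ℝ) :
    max (x - a) 0 - max (x - b) 0 ≤ (Set.Ioi a).indicator (fun _ => b - a) x := by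
  by_cases hax : a < x
  · rw [Set.indicator_of_mem (Set.mem_Ioi.2 hax), max_eq_left (by linarith)]
    linarith [le_max_left (x - b) 0]
  · have hxa := not_lt.1 hax
    rw [Set.indicator_of_notMem (mt Set.mem_Ioi.1 hax), max_eq_right (by linarith),
      max_eq_right (by linarith), sub_zero]

section

variable {Ω : Type*} [MeasurableSpace Ω] {μ : Measure Ω} {X : Ω → ℝ}

lemma MeasureTheory.Integrable.max_sub_const_zero [IsFiniteMeasure μ] (hInt : Integrable X μ)
    (r : ℝ) :
    Integrable (fun ω => max (X ω - r) 0) μ :=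
  (hInt.sub (integrable_const r)).pos_part

lemma integral_indicator_const_comp (hX : Measurable X) {s : Set ℝ} (hs : MeasurableSet s)
    (c : ℝ) : ∫ ω, s.indicator (fun _ => c) (X ω) ∂μ = μ.real (X ⁻¹' s) * c := by
  simp_rw [← Set.indicator_comp_right]
  exact integral_indicator_const _ (hX hs)

variable [IsProbabilityMeasure μ]

lemma integral_pinballLoss (hInt : Integrable X μ) (α r : ℝ) :
    ∫ ω, pinballLoss α r (X ω) ∂μ = (1 - α) * r + ∫ ω, max (X ω - r) 0 ∂μ := by
  unfold pinballLoss
  rw [integral_add (integrable_const _) (hInt.max_sub_const_zero r), integral_const,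
    probReal_univ, one_smul]

lemma measureReal_lt_eq_one_sub (hX : Measurable X) (t : ℝ) :
    μ.real {ω | t < X ω} = 1 - μ.real {ω | X ω ≤ t} := by
  rw [← probReal_compl_eq_one_sub (s := {ω | X ω ≤ t}) (hX measurableSet_Iic)]
  congr 1
  ext ω
  simp

lemma sub_mul_cdf_sub_le_integral_pinballLoss_sub (hX : Measurable X) (hInt : Integrable X μ)
    (α : ℝ) {a b : ℝ} (hab : a ≤ b) :
    (b - a) * (μ.real {ω | X ω ≤ a} - α)
      ≤ ∫ ω, pinballLoss α b (X ω) ∂μ - ∫ ω, pinballLoss α a (X ω) ∂μ := by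
  have gap : ∫ ω, max (X ω - a) 0 ∂μ - ∫ ω, max (X ω - b) 0 ∂μ
      ≤ μ.real {ω | a < X ω} * (b - a) := by
    rw [← integral_sub (hInt.max_sub_const_zero a) (hInt.max_sub_const_zero b)]
    exact (integral_mono ((hInt.max_sub_const_zero a).sub (hInt.max_sub_const_zero b))
      ((integrable_const (b - a)).indicator (hX measurableSet_Ioi))
      fun ω => max_sub_sub_max_sub_le_indicator_Ioi hab (X ω)).trans_eq
      (integral_indicator_const_comp hX measurableSet_Ioi _)
  rw [measureReal_lt_eq_one_sub hX] at gap
  rw [integral_pinballLoss hInt, integral_pinballLoss hInt]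
  linarith

lemma integral_pinballLoss_sub_le_sub_mul_cdf_sub (hX : Measurable X) (hInt : Integrable X μ)
    (α : ℝ) {a b : ℝ} (hab : a ≤ b) :
    ∫ ω, pinballLoss α b (X ω) ∂μ - ∫ ω, pinballLoss α a (X ω) ∂μ
      ≤ (b - a) * (μ.real {ω | X ω ≤ b} - α) := by
  have gap : μ.real {ω | b ≤ X ω} * (b - a)
      ≤ ∫ ω, max (X ω - a) 0 ∂μ - ∫ ω, max (X ω - b) 0 ∂μ := by
    rw [← integral_sub (hInt.max_sub_const_zero a) (hInt.max_sub_const_zero b)]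
    exact (integral_indicator_const_comp hX measurableSet_Ici _).symm.trans_le
      (integral_mono ((integrable_const (b - a)).indicator (hX measurableSet_Ici))
        ((hInt.max_sub_const_zero a).sub (hInt.max_sub_const_zero b))
        fun ω => indicator_Ici_le_max_sub_sub_max_sub hab (X ω))
  have tail : 1 - μ.real {ω | X ω ≤ b} ≤ μ.real {ω | b ≤ X ω} := by
    rw [← measureReal_lt_eq_one_sub hX]
    exact measureReal_mono fun ω (hω : b < X ω) => hω.le
  rw [integral_pinballLoss hInt, integral_pinballLoss hInt]
  linarith [mul_le_mul_of_nonneg_right tail (sub_nonneg.2 hab)]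

end

section

variable {L G : ℝ → ℝ} {q c : ℝ}

lemma strictMonoOn_Ici_of_sub_mul_sub_le (hG : StrictMonoOn G (Set.Ici q)) (hGq : G q = c)
    (hL : ∀ a b, q ≤ a → a < b → (b - a) * (G a - c) ≤ L b - L a) :
    StrictMonoOn L (Set.Ici q) := by
  subst hGq
  intro a (hqa : q ≤ a) b _ hab
  set m := (a + b) / 2 with hm
  have ham : a < m := by linarith
  have hmb : m < b := by linarith
  have h₁ : 0 ≤ (m - a) * (G a - G q) :=
    mul_nonneg (by linarith) (sub_nonneg.2 (hG.monotoneOn Set.self_mem_Ici hqa hqa))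
  have h₂ : 0 < (b - m) * (G m - G q) :=
    mul_pos (by linarith)
      (sub_pos.2 (hG Set.self_mem_Ici (hqa.trans ham.le) (hqa.trans_lt ham)))
  linarith [hL a m hqa ham, hL m b (hqa.trans ham.le) hmb]

lemma strictAntiOn_Iic_of_sub_le_sub_mul_sub (hG : StrictMonoOn G (Set.Iic q)) (hGq : G q = c)
    (hL : ∀ a b, b ≤ q → a < b → L b - L a ≤ (b - a) * (G b - c)) :
    StrictAntiOn L (Set.Iic q) := by
  subst hGq
  intro a _ b (hbq : b ≤ q) hab
  set m := (a + b) / 2 with hm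
  have ham : a < m := by linarith
  have hmb : m < b := by linarith
  have h₁ : (m - a) * (G m - G q) < 0 :=
    mul_neg_of_pos_of_neg (by linarith)
      (sub_neg.2 (hG (hmb.le.trans hbq) Set.self_mem_Iic (hmb.trans_le hbq)))
  have h₂ : (b - m) * (G b - G q) ≤ 0 :=
    mul_nonpos_of_nonneg_of_nonpos (by linarith)
      (sub_nonpos.2 (hG.monotoneOn hbq Set.self_mem_Iic hbq))
  linarith [hL a m (hmb.le.trans hbq) ham, hL m b hbq hmb]

end

theorem pinball_order_sensitive_general
    {Ω : Type*} [MeasurableSpace Ω] (μ : Measure Ω) [IsProbabilityMeasure μ]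
    (X : Ω → ℝ) (hX : Measurable X) (hInt : Integrable X μ)
    (F : ℝ → ℝ) (hF : ∀ x, F x = (μ {ω | X ω ≤ x}).toReal)
    (hFmono : StrictMono F)
    (α : ℝ)
    (q : ℝ) (hq : F q = α)
    (S : ℝ → ℝ → ℝ)
    (hS : ∀ r x, S r x = (1 - α - (if r < x then (1:ℝ) else 0)) * r
        + (if r < x then (1:ℝ) else 0) * x)
    (r r' : ℝ) (h : (q < r ∧ r < r') ∨ (r' < r ∧ r < q)) :
    (∫ ω, S q (X ω) ∂μ) < (∫ ω, S r (X ω) ∂μ)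
      ∧ (∫ ω, S r (X ω) ∂μ) < (∫ ω, S r' (X ω) ∂μ) := by
  obtain rfl : F = fun x => μ.real {ω | X ω ≤ x} := funext hF
  obtain rfl : S = pinballLoss α := by
    ext r x
    rw [hS, pinballLoss_eq_ite]
  rcases h with ⟨hqr, hrr'⟩ | ⟨hr'r, hrq⟩
  · have hmono := strictMonoOn_Ici_of_sub_mul_sub_le
      (L := fun r => ∫ ω, pinballLoss α r (X ω) ∂μ) (hFmono.strictMonoOn _) hq
      fun a b _ hab => sub_mul_cdf_sub_le_integral_pinballLoss_sub hX hInt α hab.le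
    exact ⟨hmono Set.self_mem_Ici hqr.le hqr, hmono hqr.le (hqr.trans hrr').le hrr'⟩
  · have hanti := strictAntiOn_Iic_of_sub_le_sub_mul_sub
      (L := fun r => ∫ ω, pinballLoss α r (X ω) ∂μ) (hFmono.strictMonoOn _) hq
      fun a b _ hab => integral_pinballLoss_sub_le_sub_mul_cdf_sub hX hInt α hab.le
    exact ⟨hanti hrq.le Set.self_mem_Iic hrq, hanti (hr'r.trans hrq).le hrq.le hr'r⟩

theorem pinball_order_sensitive
    {Ω : Type*} [MeasurableSpace Ω] (μ : Measure Ω) [IsProbabilityMeasure μ]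
    (X : Ω → ℝ) (hX : Measurable X) (hInt : Integrable X μ)
    (F : ℝ → ℝ) (hF : ∀ x, F x = (μ {ω | X ω ≤ x}).toReal)
    (hFcont : Continuous F) (hFmono : StrictMono F)
    (α : ℝ) (hα : α ∈ Set.Ioo (0:ℝ) 1)
    (q : ℝ) (hq : F q = α)
    (S : ℝ → ℝ → ℝ)
    (hS : ∀ r x, S r x = (1 - α - (if r < x then (1:ℝ) else 0)) * r
        + (if r < x then (1:ℝ) else 0) * x)
    (r r' : ℝ) (h : (q < r ∧ r < r') ∨ (r' < r ∧ r < q)) :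
    (∫ ω, S q (X ω) ∂μ) < (∫ ω, S r (X ω) ∂μ)
      ∧ (∫ ω, S r (X ω) ∂μ) < (∫ ω, S r' (X ω) ∂μ) :=
  pinball_order_sensitive_general μ X hX hInt F hF hFmono α q hq S hS r r' h
end

section
/- Let X be an integrable, non-constant real random variable and define G_X(z) = E[(z - X)·1{X ≤ z}] / E[|z - X|]. Then G_X is non-decreasing on ℝ, lim_{z→-∞} G_X(z) = 0, lim_{z→+∞} G_X(z) = 1, and for τ ∈ (0,1), z is the τ-expectile of X if and only if G_X is continuous at z with G_X(z) = τ (equivalently, e_τ(X) is the generalized inverse of G_X at τ). -/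
/-! Write `L z = E[(z - X)⁺]` and `U z = E[(X - z)⁺]`: `L` is nondecreasing, `U` nonincreasing,
both are 1-Lipschitz, and `E|z - X| = L z + U z > 0`. Hence `G = L / (L + U)` is nondecreasing and
continuous, the expectile equation `τ U z = (1 - τ) L z` is exactly `G z = τ`, and since
`E|z - X| ≥ |z - E X|` grows linearly, `G ≤ L 0 / E|z - X| → 0` at `-∞` and
`1 - G ≤ U 0 / E|z - X| → 0` at `+∞`. -/

open MeasureTheory Filter

theorem lipschitzWith_integral {Ω α E : Type*} [MeasurableSpace Ω] {μ : Measure Ω}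
    [IsProbabilityMeasure μ] [PseudoMetricSpace α] [NormedAddCommGroup E] [NormedSpace ℝ E]
    {f : α → Ω → E} (hf : ∀ a, Integrable (f a) μ)
    (hL : ∀ ω, LipschitzWith 1 fun a => f a ω) :
    LipschitzWith 1 fun a => ∫ ω, f a ω ∂μ := by
  refine LipschitzWith.of_dist_le_mul fun a b => ?_
  rw [dist_eq_norm, ← integral_sub (hf a) (hf b), NNReal.coe_one, one_mul]
  calc ‖∫ ω, f a ω - f b ω ∂μ‖ ≤ ∫ ω, ‖f a ω - f b ω‖ ∂μ := norm_integral_le_integral_norm _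
    _ ≤ ∫ _, dist a b ∂μ :=
        integral_mono ((hf a).sub (hf b)).norm (integrable_const _) fun ω => by
          simpa [dist_eq_norm] using (hL ω).dist_le_mul a b
    _ = dist a b := by simp

theorem sub_mul_ite_le_eq_max (x z : ℝ) :
    (z - x) * (if x ≤ z then (1 : ℝ) else 0) = max (z - x) 0 := by
  split_ifs with h
  · rw [mul_one, max_eq_left (sub_nonneg.2 h)]
  · rw [mul_zero, max_eq_right (sub_nonpos.2 (not_le.1 h).le)]

theorem sub_mul_ite_lt_eq_max (x z : ℝ) :
    (x - z) * (if z < x then (1 : ℝ) else 0) = max (x - z) 0 := by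
  split_ifs with h
  · rw [mul_one, max_eq_left (sub_nonneg.2 h.le)]
  · rw [mul_zero, max_eq_right (sub_nonpos.2 (not_lt.1 h))]

theorem monotone_div_add_of_antitone {α : Type*} [Preorder α] {n p : α → ℝ} (hn : Monotone n)
    (hp : Antitone p) (hn0 : ∀ a, 0 ≤ n a) (hp0 : ∀ a, 0 ≤ p a) (hpos : ∀ a, 0 < n a + p a) :
    Monotone fun a => n a / (n a + p a) := by
  intro a b hab
  rw [div_le_div_iff₀ (hpos a) (hpos b)]
  nlinarith [mul_le_mul (hn hab) (hp hab) (hp0 b) (hn0 b)]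

theorem div_add_eq_iff_mul_eq_one_sub_mul {n p τ : ℝ} (h : 0 < n + p) :
    n / (n + p) = τ ↔ τ * p = (1 - τ) * n := by
  rw [div_eq_iff h.ne']
  constructor <;> intro <;> linarith

theorem tendsto_div_atTop_nhds_zero_of_bounded {α : Type*} {l : Filter α} {f g : α → ℝ} {C : ℝ}
    (hf0 : ∀ᶠ a in l, 0 ≤ f a) (hfC : ∀ᶠ a in l, f a ≤ C) (hg : Tendsto g l atTop) :
    Tendsto (fun a => f a / g a) l (nhds 0) := by
  refine tendsto_of_tendsto_of_tendsto_of_le_of_le' tendsto_const_nhds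
    ((tendsto_const_nhds (x := C)).div_atTop hg) ?_ ?_
  · filter_upwards [hf0, hg.eventually_ge_atTop 0] with a hfa hga using div_nonneg hfa hga
  · filter_upwards [hfC, hg.eventually_ge_atTop 0] with a hfa hga
    using div_le_div_of_nonneg_right hfa hga

section PartialMoments

variable {Ω : Type*} [MeasurableSpace Ω] (μ : Measure Ω) (X : Ω → ℝ)

noncomputable def lowerPartialMoment (z : ℝ) : ℝ := ∫ ω, max (z - X ω) 0 ∂μ

noncomputable def upperPartialMoment (z : ℝ) : ℝ := ∫ ω, max (X ω - z) 0 ∂μ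

noncomputable def meanAbsDeviation (z : ℝ) : ℝ := ∫ ω, |z - X ω| ∂μ

noncomputable def inverseExpectileFunction (z : ℝ) : ℝ :=
  lowerPartialMoment μ X z / meanAbsDeviation μ X z

theorem lowerPartialMoment_nonneg (z : ℝ) : 0 ≤ lowerPartialMoment μ X z :=
  integral_nonneg fun _ => le_max_right _ _

theorem upperPartialMoment_nonneg (z : ℝ) : 0 ≤ upperPartialMoment μ X z :=
  integral_nonneg fun _ => le_max_right _ _

variable {μ X} [IsFiniteMeasure μ]

theorem monotone_lowerPartialMoment (hX : Integrable X μ) :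
    Monotone (lowerPartialMoment μ X) := fun a b hab =>
  integral_mono ((integrable_const a).sub hX).pos_part ((integrable_const b).sub hX).pos_part
    fun _ => max_le_max (sub_le_sub_right hab _) le_rfl

theorem antitone_upperPartialMoment (hX : Integrable X μ) :
    Antitone (upperPartialMoment μ X) := fun a b hab =>
  integral_mono (hX.sub (integrable_const b)).pos_part (hX.sub (integrable_const a)).pos_part
    fun _ => max_le_max (sub_le_sub_left hab _) le_rfl

theorem lowerPartialMoment_add_upperPartialMoment (hX : Integrable X μ) (z : ℝ) :
    lowerPartialMoment μ X z + upperPartialMoment μ X z = meanAbsDeviation μ X z := by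
  have hL : Integrable (fun ω => max (z - X ω) 0) μ := ((integrable_const z).sub hX).pos_part
  have hU : Integrable (fun ω => max (X ω - z) 0) μ := (hX.sub (integrable_const z)).pos_part
  rw [lowerPartialMoment, upperPartialMoment, meanAbsDeviation, ← integral_add hL hU]
  congr 1 with ω
  rw [← neg_sub z (X ω), max_zero_add_max_neg_zero_eq_abs_self]

theorem meanAbsDeviation_pos (hX : Integrable X μ) (hNC : ¬ ∃ c : ℝ, ∀ᵐ ω ∂μ, X ω = c)
    (z : ℝ) : 0 < meanAbsDeviation μ X z := by
  refine (integral_nonneg fun ω => abs_nonneg (z - X ω)).lt_of_ne fun h => hNC ⟨z, ?_⟩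
  filter_upwards [(integral_eq_zero_iff_of_nonneg (fun ω => abs_nonneg (z - X ω))
    ((integrable_const z).sub hX).abs).1 h.symm] with ω hω
  exact (sub_eq_zero.1 (abs_eq_zero.1 hω)).symm

theorem monotone_inverseExpectileFunction (hX : Integrable X μ)
    (hNC : ¬ ∃ c : ℝ, ∀ᵐ ω ∂μ, X ω = c) : Monotone (inverseExpectileFunction μ X) := by
  have hLU := lowerPartialMoment_add_upperPartialMoment hX
  have hpos z : 0 < lowerPartialMoment μ X z + upperPartialMoment μ X z :=
    (hLU z).symm ▸ meanAbsDeviation_pos hX hNC z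
  convert monotone_div_add_of_antitone (monotone_lowerPartialMoment hX)
    (antitone_upperPartialMoment hX) (lowerPartialMoment_nonneg μ X)
    (upperPartialMoment_nonneg μ X) hpos using 2
  rw [inverseExpectileFunction, hLU]

theorem inverseExpectileFunction_eq_iff (hX : Integrable X μ)
    (hNC : ¬ ∃ c : ℝ, ∀ᵐ ω ∂μ, X ω = c) (τ z : ℝ) :
    inverseExpectileFunction μ X z = τ ↔
      τ * upperPartialMoment μ X z = (1 - τ) * lowerPartialMoment μ X z := by
  have hpos := meanAbsDeviation_pos hX hNC z
  rw [← lowerPartialMoment_add_upperPartialMoment hX] at hpos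
  rw [inverseExpectileFunction, ← lowerPartialMoment_add_upperPartialMoment hX,
    div_add_eq_iff_mul_eq_one_sub_mul hpos]

theorem one_sub_inverseExpectileFunction (hX : Integrable X μ)
    (hNC : ¬ ∃ c : ℝ, ∀ᵐ ω ∂μ, X ω = c) (z : ℝ) :
    1 - inverseExpectileFunction μ X z = upperPartialMoment μ X z / meanAbsDeviation μ X z := by
  rw [inverseExpectileFunction, one_sub_div (meanAbsDeviation_pos hX hNC z).ne',
    ← lowerPartialMoment_add_upperPartialMoment hX, add_sub_cancel_left]

end PartialMoments

section ProbabilityMeasure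

variable {Ω : Type*} [MeasurableSpace Ω] {μ : Measure Ω} [IsProbabilityMeasure μ] {X : Ω → ℝ}

theorem abs_sub_integral_le_meanAbsDeviation (hX : Integrable X μ) (z : ℝ) :
    |z - ∫ ω, X ω ∂μ| ≤ meanAbsDeviation μ X z := by
  have h := norm_integral_le_integral_norm (μ := μ) fun ω => z - X ω
  rwa [integral_sub (integrable_const z) hX, integral_const, probReal_univ, one_smul] at h

theorem tendsto_meanAbsDeviation_atBot (hX : Integrable X μ) :
    Tendsto (meanAbsDeviation μ X) atBot atTop :=
  tendsto_atTop_mono (abs_sub_integral_le_meanAbsDeviation hX)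
    (tendsto_abs_atBot_atTop.comp (tendsto_atBot_add_const_right _ _ tendsto_id))

theorem tendsto_meanAbsDeviation_atTop (hX : Integrable X μ) :
    Tendsto (meanAbsDeviation μ X) atTop atTop :=
  tendsto_atTop_mono (abs_sub_integral_le_meanAbsDeviation hX)
    (tendsto_abs_atTop_atTop.comp (tendsto_atTop_add_const_right _ _ tendsto_id))

theorem continuous_lowerPartialMoment (hX : Integrable X μ) :
    Continuous (lowerPartialMoment μ X) :=
  (lipschitzWith_integral (fun z => ((integrable_const z).sub hX).pos_part)
    fun ω => (IsometryEquiv.subRight (X ω)).isometry.lipschitz.max_const 0).continuous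

theorem continuous_upperPartialMoment (hX : Integrable X μ) :
    Continuous (upperPartialMoment μ X) :=
  (lipschitzWith_integral (fun z => (hX.sub (integrable_const z)).pos_part)
    fun ω => (IsometryEquiv.subLeft (X ω)).isometry.lipschitz.max_const 0).continuous

theorem continuous_inverseExpectileFunction (hX : Integrable X μ)
    (hNC : ¬ ∃ c : ℝ, ∀ᵐ ω ∂μ, X ω = c) : Continuous (inverseExpectileFunction μ X) := by
  refine (continuous_lowerPartialMoment hX).div ?_ fun z => (meanAbsDeviation_pos hX hNC z).ne'
  rw [← funext (lowerPartialMoment_add_upperPartialMoment hX)]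
  exact (continuous_lowerPartialMoment hX).add (continuous_upperPartialMoment hX)

theorem tendsto_inverseExpectileFunction_atBot (hX : Integrable X μ) :
    Tendsto (inverseExpectileFunction μ X) atBot (nhds 0) :=
  tendsto_div_atTop_nhds_zero_of_bounded (.of_forall (lowerPartialMoment_nonneg μ X))
    ((eventually_le_atBot 0).mono fun _ hz => monotone_lowerPartialMoment hX hz)
    (tendsto_meanAbsDeviation_atBot hX)

theorem tendsto_inverseExpectileFunction_atTop (hX : Integrable X μ)
    (hNC : ¬ ∃ c : ℝ, ∀ᵐ ω ∂μ, X ω = c) :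
    Tendsto (inverseExpectileFunction μ X) atTop (nhds 1) := by
  have hU := tendsto_div_atTop_nhds_zero_of_bounded (.of_forall (upperPartialMoment_nonneg μ X))
    ((eventually_ge_atTop 0).mono fun _ hz => antitone_upperPartialMoment hX hz)
    (tendsto_meanAbsDeviation_atTop hX)
  simpa only [← one_sub_inverseExpectileFunction hX hNC, sub_sub_cancel, sub_zero] using
    hU.const_sub (1 : ℝ)

end ProbabilityMeasure

theorem inverse_expectile_function_properties_general
    {Ω : Type*} [MeasurableSpace Ω] (μ : Measure Ω) [IsProbabilityMeasure μ]
    (X : Ω → ℝ) (hInt : Integrable X μ)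
    (hNC : ¬ ∃ c : ℝ, ∀ᵐ ω ∂μ, X ω = c)
    (G : ℝ → ℝ)
    (hG : ∀ z, G z = (∫ ω, (z - X ω) * (if X ω ≤ z then (1:ℝ) else 0) ∂μ)
        / (∫ ω, |z - X ω| ∂μ)) :
    Monotone G
    ∧ Tendsto G atBot (nhds 0)
    ∧ Tendsto G atTop (nhds 1)
    ∧ ∀ τ ∈ Set.Ioo (0:ℝ) 1, ∀ z : ℝ,
        (τ * ∫ ω, (X ω - z) * (if z < X ω then (1:ℝ) else 0) ∂μ
          = (1 - τ) * ∫ ω, (z - X ω) * (if X ω ≤ z then (1:ℝ) else 0) ∂μ)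
        ↔ (ContinuousAt G z ∧ G z = τ) := by
  obtain rfl : G = inverseExpectileFunction μ X := funext fun z => by
    simp only [hG, sub_mul_ite_le_eq_max]; rfl
  refine ⟨monotone_inverseExpectileFunction hInt hNC, tendsto_inverseExpectileFunction_atBot hInt,
    tendsto_inverseExpectileFunction_atTop hInt hNC, fun τ _ z => ?_⟩
  simp only [sub_mul_ite_lt_eq_max, sub_mul_ite_le_eq_max]
  rw [and_iff_right (continuous_inverseExpectileFunction hInt hNC).continuousAt,
    inverseExpectileFunction_eq_iff hInt hNC]
  rfl

theorem inverse_expectile_function_properties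
    {Ω : Type*} [MeasurableSpace Ω] (μ : Measure Ω) [IsProbabilityMeasure μ]
    (X : Ω → ℝ) (hX : Measurable X) (hInt : Integrable X μ)
    (hNC : ¬ ∃ c : ℝ, ∀ᵐ ω ∂μ, X ω = c)
    (G : ℝ → ℝ)
    (hG : ∀ z, G z = (∫ ω, (z - X ω) * (if X ω ≤ z then (1:ℝ) else 0) ∂μ)
        / (∫ ω, |z - X ω| ∂μ)) :
    Monotone G
    ∧ Tendsto G atBot (nhds 0)
    ∧ Tendsto G atTop (nhds 1)
    ∧ ∀ τ ∈ Set.Ioo (0:ℝ) 1, ∀ z : ℝ,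
        (τ * ∫ ω, (X ω - z) * (if z < X ω then (1:ℝ) else 0) ∂μ
          = (1 - τ) * ∫ ω, (z - X ω) * (if X ω ≤ z then (1:ℝ) else 0) ∂μ)
        ↔ (ContinuousAt G z ∧ G z = τ) :=
  inverse_expectile_function_properties_general μ X hInt hNC G hG
end
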